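/- If X is a topological space, μ is a regular cardinal, and every point of X is a T_μ point (T_μ(X) = X), then X is μ-resolvable. -/

import Mathlib

universe u

open Cardinal Set

/-- A space is `κ`-resolvable iff it has `κ` pairwise disjoint dense subsets. -/
def Resolvable (X : Type u) [TopologicalSpace X] (κ : Cardinal.{u}) : Prop :=
  ∃ (ι : Type u) (D : ι → Set X), #ι = κ ∧ (∀ i, Dense (D i)) ∧
    Pairwise (Function.onFun Disjoint D)

/-- `L` is left-separated: it has a well-ordering all of whose initial segments
are closed in the subspace `L`. -/
def LeftSeparated {X : Type u} [TopologicalSpace X] (L : Set X) : Prop :=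
  ∃ r : L → L → Prop, IsWellOrder L r ∧ ∀ x : L, IsClosed {y : L | r y x}

/-- `R` is right-separated: it has a well-ordering all of whose initial segments
are open in the subspace `R`. -/
def RightSeparated {X : Type u} [TopologicalSpace X] (R : Set X) : Prop :=
  ∃ r : R → R → Prop, IsWellOrder R r ∧ ∀ x : R, IsOpen {y : R | r y x}

/-- The dispersion character `Δ(X)`: the minimal cardinality of a nonempty open set. -/
noncomputable def dispersion (X : Type u) [TopologicalSpace X] : Cardinal.{u} :=
  sInf {c | ∃ G : Set X, IsOpen G ∧ G.Nonempty ∧ #G = c}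

/-- `x` is a `T_μ` point of `X`. -/
def IsTPoint (X : Type u) [TopologicalSpace X] (μ : Cardinal.{u}) (x : X) : Prop :=
  ∀ A : Set X, #A < μ → ∃ B : Set X, B ⊆ Aᶜ ∧ #B < μ ∧ x ∈ closure B

/-!
Fix `x₀` and a selector `g` assigning to a point `y` and a set `A` with `|A| < μ` a set of size
`< μ` that avoids `A` and accumulates at `y`. Recursively along `μ`, stage `α` is the union of the
sets `g y A_α` over the points `y` of `A_α = {x₀} ∪ ⋃_{β<α} stage β`. Regularity of `μ` keeps all
of these sets of size `< μ`, so the stages are pairwise disjoint, and every point of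
`Y = {x₀} ∪ ⋃_α stage α` lies in the closure of every late enough stage. Splitting `μ` into `μ`
cofinal pieces and uniting the stages of each piece yields `μ` disjoint subsets of `Y`, each dense
in `Y`. Intersected with an open set this property survives, so every nonempty open set contains
such a `Y`; a maximal disjoint family of them (Zorn) has dense union and glues to `μ` disjoint
dense subsets of `X`.
-/

open Function Filter

section Resolution

variable {X : Type u} [TopologicalSpace X] {ι : Type*}

def IsResolution (D : ι → Set X) (Y : Set X) : Prop :=
  (∀ i, D i ⊆ Y) ∧ (∀ i, Y ⊆ closure (D i)) ∧ Pairwise (Disjoint on D)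

theorem IsResolution.inter_isOpen {D : ι → Set X} {Y U : Set X} (h : IsResolution D Y)
    (hU : IsOpen U) : IsResolution (fun i => D i ∩ U) (Y ∩ U) :=
  ⟨fun i => inter_subset_inter_left U (h.1 i),
    fun i => (inter_subset_inter_left U (h.2.1 i)).trans hU.closure_inter,
    fun _ _ hij => (h.2.2 hij).mono inter_subset_left inter_subset_left⟩

theorem IsResolution.dense {D : ι → Set X} {Y : Set X} (h : IsResolution D Y) (hY : Dense Y)
    (i : ι) : Dense (D i) :=
  dense_closure.mp (hY.mono (h.2.1 i))

theorem IsResolution.sUnion {M : Set (Set X)} (hM : M.PairwiseDisjoint id)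
    (D : M → ι → Set X) (hD : ∀ Y : M, IsResolution (D Y) Y) :
    IsResolution (fun i => ⋃ Y : M, D Y i) (⋃₀ M) := by
  refine ⟨fun i => iUnion_subset fun Y => ((hD Y).1 i).trans (subset_sUnion_of_mem Y.2),
    fun i => sUnion_subset fun Y hY => ((hD ⟨Y, hY⟩).2.1 i).trans
      (closure_mono (subset_iUnion (fun Y : M => D Y i) ⟨Y, hY⟩)), fun i j hij => ?_⟩
  refine disjoint_iUnion_left.mpr fun Y => disjoint_iUnion_right.mpr fun Z => ?_
  obtain rfl | hYZ := eq_or_ne Y Z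
  · exact (hD Y).2.2 hij
  · exact (hM Y.2 Z.2 (Subtype.coe_ne_coe.mpr hYZ)).mono ((hD Y).1 i) ((hD Z).1 j)

/-- A maximal disjoint family of sets with property `P` (Zorn) has dense union. -/
theorem exists_pairwiseDisjoint_dense_sUnion {P : Set X → Prop}
    (h : ∀ U, IsOpen U → U.Nonempty → ∃ Y ⊆ U, Y.Nonempty ∧ P Y) :
    ∃ M : Set (Set X), (∀ Y ∈ M, P Y) ∧ M.PairwiseDisjoint id ∧ Dense (⋃₀ M) := by
  obtain ⟨M, hM⟩ := zorn_subset {M : Set (Set X) | (∀ Y ∈ M, P Y) ∧ M.PairwiseDisjoint id}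
    fun c hc hchain => ⟨⋃₀ c, ⟨fun Y ⟨N, hN, hY⟩ => (hc hN).1 Y hY,
      (pairwiseDisjoint_sUnion hchain.directedOn).mpr fun N hN => (hc hN).2⟩,
      fun _ => subset_sUnion_of_mem⟩
  refine ⟨M, hM.prop.1, hM.prop.2, dense_iff_closure_eq.mpr (by_contra fun hne => ?_)⟩
  obtain ⟨Y, hYU, ⟨y, hy⟩, hPY⟩ :=
    h _ isClosed_closure.isOpen_compl (nonempty_compl.mpr hne)
  have hdisj : ∀ Z ∈ M, Disjoint Y Z := fun Z hZ =>
    disjoint_compl_left.mono hYU ((subset_sUnion_of_mem hZ).trans subset_closure)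
  have hYM : Y ∈ M := hM.mem_of_prop_insert
    ⟨forall_mem_insert.mpr ⟨hPY, hM.prop.1⟩, hM.prop.2.insert fun Z hZ _ => hdisj Z hZ⟩
  exact hYU hy (subset_closure (subset_sUnion_of_mem hYM hy))

theorem exists_dense_pairwise_disjoint_of_forall_isOpen
    (h : ∀ U, IsOpen U → U.Nonempty →
      ∃ Y ⊆ U, Y.Nonempty ∧ ∃ D : ι → Set X, IsResolution D Y) :
    ∃ D : ι → Set X, (∀ i, Dense (D i)) ∧ Pairwise (Disjoint on D) := by
  obtain ⟨M, hMres, hMdisj, hMdense⟩ := exists_pairwiseDisjoint_dense_sUnion h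
  choose D hD using fun Y : M => hMres Y Y.2
  have hres := IsResolution.sUnion hMdisj D hD
  exact ⟨_, hres.dense hMdense, hres.2.2⟩

theorem isResolution_iUnion_fiber {κ : Type*} {l : Filter κ} {E : κ → Set X} {Y : Set X}
    (c : κ → ι) (hc : ∀ i, ∃ᶠ α in l, c α = i) (hEY : ∀ α, E α ⊆ Y)
    (hY : ∀ y ∈ Y, ∀ᶠ α in l, y ∈ closure (E α)) (hE : Pairwise (Disjoint on E)) :
    IsResolution (fun i => ⋃ (α) (_ : c α = i), E α) Y := by
  refine ⟨fun i => iUnion₂_subset fun α _ => hEY α, fun i y hy => ?_, fun i j hij => ?_⟩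
  · obtain ⟨α, hα, hyα⟩ := ((hc i).and_eventually (hY y hy)).exists
    exact closure_mono (subset_iUnion₂_of_subset α hα subset_rfl) hyα
  · simp only [onFun, disjoint_iUnion₂_left, disjoint_iUnion₂_right]
    rintro α rfl β rfl
    exact hE fun hαβ => hij (congrArg c hαβ)

end Resolution

theorem exists_frequently_atTop_eq {ι : Type u} [LinearOrder ι] (hι : ∀ a : ι, #(Iio a) < #ι)
    (hinf : ℵ₀ ≤ #ι) : ∃ c : ι → ι, ∀ i, ∃ᶠ α in atTop, c α = i := by
  obtain ⟨e⟩ : Nonempty (ι ≃ ι × ι) := by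
    rw [← Cardinal.eq, mk_prod, lift_id, mul_eq_self hinf]
  have := infinite_iff.mpr hinf
  refine ⟨fun α => (e α).1, fun i => frequently_atTop.mpr fun a => ?_⟩
  by_contra! hbdd
  have hIio (o : ι) : e.symm (i, o) ∈ Iio a := not_le.mp fun hle => hbdd _ hle (by simp)
  refine (hι a).not_ge
    (mk_le_of_injective (f := fun o => (⟨_, hIio o⟩ : Iio a)) fun o o' h => ?_)
  simpa using congrArg Subtype.val h

section Stages

variable {X : Type u} {ι : Type u} [LinearOrder ι] [WellFoundedLT ι]

noncomputable def stage (g : X → Set X → Set X) (x₀ : X) : ι → Set X :=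
  WellFoundedLT.fix fun α prev =>
    let A := insert x₀ (⋃ β : Iio α, prev β β.2)
    ⋃ y ∈ A, g y A

def reached (g : X → Set X → Set X) (x₀ : X) (α : ι) : Set X :=
  insert x₀ (⋃ β : Iio α, stage g x₀ (β : ι))

variable {g : X → Set X → Set X} {x₀ : X} {μ : Cardinal.{u}}

theorem stage_eq (α : ι) :
    stage g x₀ α = ⋃ y ∈ reached g x₀ α, g y (reached g x₀ α) :=
  WellFoundedLT.fix_eq _ α

theorem stage_subset_reached {β α : ι} (h : β < α) : stage g x₀ β ⊆ reached g x₀ α :=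
  (subset_iUnion (fun β : Iio α => stage g x₀ (β : ι)) ⟨β, h⟩).trans (subset_insert _ _)

theorem mk_reached_lt_of_mk_stage_lt (hμ : μ.IsRegular) (hι : ∀ α : ι, #(Iio α) < μ) {α : ι}
    (h : ∀ β < α, #(stage g x₀ β) < μ) : #(reached g x₀ α) < μ :=
  mk_insert_le.trans_lt (add_lt_of_lt hμ.aleph0_le
    ((card_iUnion_lt_iff_forall_of_isRegular hμ (hι α)).mpr fun β => h β β.2)
    (one_lt_aleph0.trans_le hμ.aleph0_le))

variable [TopologicalSpace X]

def IsTSelector (μ : Cardinal.{u}) (g : X → Set X → Set X) : Prop :=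
  ∀ (y : X) (A : Set X), #A < μ → g y A ⊆ Aᶜ ∧ #(g y A) < μ ∧ y ∈ closure (g y A)

theorem exists_isTSelector (h : ∀ x : X, IsTPoint X μ x) :
    ∃ g : X → Set X → Set X, IsTSelector μ g := by
  suffices ∀ (y : X) (A : Set X), ∃ B, #A < μ → B ⊆ Aᶜ ∧ #B < μ ∧ y ∈ closure B by
    choose g hg using this
    exact ⟨g, hg⟩
  intro y A
  by_cases hA : #A < μ
  · obtain ⟨B, hB⟩ := h y A hA
    exact ⟨B, fun _ => hB⟩
  · exact ⟨∅, fun h => absurd h hA⟩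

theorem mk_stage_lt (hμ : μ.IsRegular) (hι : ∀ α : ι, #(Iio α) < μ) (hg : IsTSelector μ g)
    (α : ι) : #(stage g x₀ α) < μ := by
  induction α using WellFoundedLT.induction with
  | ind α ih =>
    have hA := mk_reached_lt_of_mk_stage_lt hμ hι ih
    rw [stage_eq, biUnion_eq_iUnion]
    exact (card_iUnion_lt_iff_forall_of_isRegular hμ hA).mpr fun y => (hg y _ hA).2.1

theorem mk_reached_lt (hμ : μ.IsRegular) (hι : ∀ α : ι, #(Iio α) < μ)
    (hg : IsTSelector μ g) (α : ι) : #(reached g x₀ α) < μ :=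
  mk_reached_lt_of_mk_stage_lt hμ hι fun β _ => mk_stage_lt hμ hι hg β

theorem pairwise_disjoint_stage (hμ : μ.IsRegular) (hι : ∀ α : ι, #(Iio α) < μ)
    (hg : IsTSelector μ g) : Pairwise (Disjoint on (stage g x₀ : ι → Set X)) := by
  refine (pairwise_disjoint_on _).mpr fun β α hβα =>
    (disjoint_compl_right.mono_right ?_).mono (stage_subset_reached hβα) subset_rfl
  rw [stage_eq]
  exact iUnion₂_subset fun y _ => (hg y _ (mk_reached_lt hμ hι hg α)).1

theorem eventually_mem_closure_stage [NoMaxOrder ι] (hμ : μ.IsRegular)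
    (hι : ∀ α : ι, #(Iio α) < μ) (hg : IsTSelector μ g) {y : X}
    (hy : y ∈ insert x₀ (⋃ α : ι, stage g x₀ α)) :
    ∀ᶠ α : ι in atTop, y ∈ closure (stage g x₀ α) := by
  have hreached : ∀ᶠ α : ι in atTop, y ∈ reached g x₀ α := by
    obtain rfl | hy := hy
    · exact .of_forall fun α => mem_insert _ _
    · obtain ⟨β, hβ⟩ := mem_iUnion.mp hy
      exact (eventually_gt_atTop β).mono fun α hα => stage_subset_reached hα hβ
  refine hreached.mono fun α hα =>
    closure_mono ?_ (hg y _ (mk_reached_lt (x₀ := x₀) hμ hι hg α)).2.2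
  rw [stage_eq]
  exact subset_biUnion_of_mem (u := fun y => g y (reached g x₀ α)) hα

end Stages

theorem exists_isResolution_of_forall_isTPoint {X : Type u} [TopologicalSpace X]
    {μ : Cardinal.{u}} (hμ : μ.IsRegular) (h : ∀ x : X, IsTPoint X μ x) (x₀ : X) :
    ∃ Y : Set X, x₀ ∈ Y ∧ ∃ D : μ.ord.ToType → Set X, IsResolution D Y := by
  obtain ⟨g, hg⟩ := exists_isTSelector h
  have := Cardinal.noMaxOrder hμ.aleph0_le
  have hι (α : μ.ord.ToType) : #(Iio α) < μ := by simpa using mk_Iio_lt α (by simp)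
  obtain ⟨c, hc⟩ := exists_frequently_atTop_eq (ι := μ.ord.ToType)
    (by simpa using hι) (by simpa using hμ.aleph0_le)
  exact ⟨_, mem_insert x₀ _, _, isResolution_iUnion_fiber c hc
    (fun α => (subset_iUnion _ α).trans (subset_insert _ _))
    (fun y hy => eventually_mem_closure_stage hμ hι hg hy) (pairwise_disjoint_stage hμ hι hg)⟩

/-- If `μ` is regular and every point of `X` is a `T_μ` point, then `X` is
`μ`-resolvable. -/
theorem stmt17 {X : Type u} [TopologicalSpace X] (μ : Cardinal.{u})
    (hreg : μ.IsRegular) (h : ∀ x : X, IsTPoint X μ x) :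
    Resolvable X μ := by
  obtain ⟨D, hD, hdisj⟩ := exists_dense_pairwise_disjoint_of_forall_isOpen (ι := μ.ord.ToType)
    fun U hU hne => by
      obtain ⟨x₀, hx₀⟩ := hne
      obtain ⟨Y, hx₀Y, D, hD⟩ := exists_isResolution_of_forall_isTPoint hreg h x₀
      exact ⟨Y ∩ U, inter_subset_right, ⟨x₀, hx₀Y, hx₀⟩, _, hD.inter_isOpen hU⟩
  exact ⟨μ.ord.ToType, D, mk_ord_toType μ, hD, hdisj⟩
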